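/- Fix s ∈ S_0, t > t_s, A ≥ 1 and B, C ≥ 0. Then for every K ≥ 1 there is an N ∈ ℕ such that for all n ≥ N, F^∘n(t) ≥ A t*_{σ^n s} + B log K + C. Moreover, letting N(K, t) be the least such N: (1) for fixed K, N(K, t) is weakly monotonically decreasing in t; (2) if t ≥ A t_s* + B log K + C then N(K, t) = 0; (3) if N_0 satisfies F^∘N_0(t) ≥ A t*_{σ^{N_0} s} + C + 1 and N_1 satisfies F^∘N_1(1) ≥ B log K, then F^∘n(t) ≥ A t*_{σ^n s} + B log K + C holds for all n ≥ N_0 + N_1. -/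

import Mathlib

open Filter Topology Set MeasureTheory
open scoped ENNReal Real

noncomputable section

/-- The exponential family `E_κ(z) = exp (z + κ)`. -/
def Ek (κ : ℂ) (z : ℂ) : ℂ := Complex.exp (z + κ)

/-- The model function `F(t) = e^t - 1` for exponential growth. -/
def F (t : ℝ) : ℝ := Real.exp t - 1

/-- The inverse of `F` on the nonnegative reals. -/
def Finv (t : ℝ) : ℝ := Real.log (t + 1)

/-- The shift map `σ` on integer sequences; the sequence `s : ℕ → ℤ` represents
`(s_1, s_2, …)` with `s_{k+1} = s k`. -/
def shiftSeq (s : ℕ → ℤ) : ℕ → ℤ := fun n => s (n + 1)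

/-- Exponentially bounded sequences (membership in `S_0`). -/
def expBounded (s : ℕ → ℤ) : Prop := ∃ x > 0, ∀ k : ℕ, |(s k : ℝ)| ≤ F^[k] x

/-- `t_s^* = sup_{n ≥ 1} F^{∘(-n+1)}(|s_n|)`, as an extended nonnegative real. -/
def tstar (s : ℕ → ℤ) : ℝ≥0∞ := ⨆ n : ℕ, ENNReal.ofReal (Finv^[n] |(s n : ℝ)|)

/-- `t_s^*` as a real number (for exponentially bounded `s`). -/
def tstarR (s : ℕ → ℤ) : ℝ := (tstar s).toReal

/-- The minimal potential `t_s`. -/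
def tmin (s : ℕ → ℤ) : ℝ≥0∞ :=
  sInf { y : ℝ≥0∞ | ∃ x : ℝ, 0 < x ∧ y = ENNReal.ofReal x ∧
    Filter.limsup (fun n => ENNReal.ofReal (|(s n : ℝ)| / F^[n] x)) Filter.atTop = 0 }

/-- The slit plane `ℂ' = ℂ ∖ (-∞, 0]`. -/
def Cprime : Set ℂ := {z : ℂ | 0 < z.re ∨ z.im ≠ 0}

/-- The inverse branch `L_{κ,j}(z) = Log z - κ + 2πij`. -/
def Lk (κ : ℂ) (j : ℤ) (z : ℂ) : ℂ :=
  Complex.log z - κ + 2 * (Real.pi : ℂ) * Complex.I * (j : ℂ)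

/-- The pullback approximants `g^n_{κ,s}(t) = L_{κ,s_1} ∘ ⋯ ∘ L_{κ,s_n}(F^∘n(t))`. -/
def gApprox (κ : ℂ) : ℕ → (ℕ → ℤ) → ℝ → ℂ
  | 0, _, t => (t : ℂ)
  | n + 1, s, t => Lk κ (s 0) (gApprox κ n (shiftSeq s) (F t))

/-- All intermediate values of the `n`-th pullback approximant lie in the slit plane. -/
def approxDefined (κ : ℂ) : ℕ → (ℕ → ℤ) → ℝ → Prop
  | 0, _, _ => True
  | n + 1, s, t => gApprox κ n (shiftSeq s) (F t) ∈ Cprime ∧ approxDefined κ n (shiftSeq s) (F t)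

/-- The pullback approximants at `(s, t)` are eventually defined and converge to `z`. -/
def RayTendsto (κ : ℂ) (s : ℕ → ℤ) (t : ℝ) (z : ℂ) : Prop :=
  (∀ᶠ n in Filter.atTop, approxDefined κ n s t) ∧
  Filter.Tendsto (fun n => gApprox κ n s t) Filter.atTop (nhds z)

/-- The dynamic ray of `E_κ` at address `s` is defined at potential `t`. -/
def RayDefinedAt (κ : ℂ) (s : ℕ → ℤ) (t : ℝ) : Prop := ∃ z, RayTendsto κ s t z

-- The dynamic ray `g_s^κ(t)` (junk value `0` where undefined).
open Classical in
def ray (κ : ℂ) (s : ℕ → ℤ) (t : ℝ) : ℂ :=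
  if h : ∃ z, RayTendsto κ s t z then h.choose else 0

/-- The set `𝒢_s(t)` of parameters `κ` for which the dynamic ray of `E_κ` at address `s`
is defined at potential `t` with `g_s^κ(t) = 0`. -/
def Gset (s : ℕ → ℤ) (t : ℝ) : Set ℂ :=
  {κ : ℂ | ∃ N : ℕ, RayTendsto κ (shiftSeq^[N] s) (F^[N] t) ((Ek κ)^[N] 0)}

/-- The set `I` of escaping parameters. -/
def escapingParams : Set ℂ :=
  {κ : ℂ | Filter.Tendsto (fun n => ‖(Ek κ)^[n] 0‖) Filter.atTop Filter.atTop}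

/-- The interval `(t_s, ∞)` of potentials. -/
def rayDomain (s : ℕ → ℤ) : Set ℝ := {t : ℝ | tmin s < ENNReal.ofReal t}

/-- `κ₀` is a simple root of the holomorphic map `κ ↦ g_s^κ(t)`. -/
def SimpleRoot (s : ℕ → ℤ) (t : ℝ) (κ₀ : ℂ) : Prop :=
  ray κ₀ s t = 0 ∧ RayDefinedAt κ₀ s t ∧
  ∃ U ∈ nhds κ₀, (∀ κ ∈ U, RayDefinedAt κ s t) ∧
    DifferentiableOn ℂ (fun κ => ray κ s t) U ∧
    deriv (fun κ => ray κ s t) κ₀ ≠ 0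

end

/-!
The bound propagates along the orbit: `t*_{σ s} ≤ F(t*_s)`, and `A F(u) + F(D) ≤ F(A u + D)`
for `A ≥ 1` and `u, D ≥ 0` (convexity and superadditivity of `F`), so
`A t*_{σ^m s} + D ≤ F^m(t)` implies `A t*_{σ^{m+k} s} + F^k(D) ≤ F^{m+k}(t)` for every `k`.
This gives (2) and (3), and (1) is the monotonicity of `F^n`. For the existence of `N`, `t > t_s`
yields `x < t` with `|s_n| ≤ F^n(x)`, hence `t*_{σ^n s} ≤ F^n(x)`, for large `n`, while
`F^n(t) - F^n(x) ≥ F^n(t - x) → ∞`; one step after this gap exceeds `log (A + C + 1)` the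
hypothesis of (3) on `N₀` holds, and `F^n(1) → ∞` supplies `N₁`.
-/

open Function

lemma F_strictMono : StrictMono F := fun _ _ h => by
  simpa [F] using Real.exp_lt_exp.2 h

lemma F_monotone : Monotone F := F_strictMono.monotone

lemma le_F (t : ℝ) : t ≤ F t := by
  have := Real.add_one_le_exp t
  unfold F; linarith

lemma lt_F {t : ℝ} (ht : t ≠ 0) : t < F t := by
  have := Real.add_one_lt_exp ht
  unfold F; linarith

lemma F_add_F_le_F_add {a b : ℝ} (ha : 0 ≤ a) (hb : 0 ≤ b) : F a + F b ≤ F (a + b) := by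
  have := mul_nonneg (sub_nonneg.2 (Real.one_le_exp ha)) (sub_nonneg.2 (Real.one_le_exp hb))
  unfold F; rw [Real.exp_add]; linarith

-- Bernoulli's inequality for `(1 + (e^u - 1))^A`.
lemma mul_F_le_F_mul {A : ℝ} (hA : 1 ≤ A) (u : ℝ) : A * F u ≤ F (A * u) := by
  have := one_add_mul_self_le_rpow_one_add (by linarith [Real.exp_pos u] : -1 ≤ Real.exp u - 1) hA
  rw [add_sub_cancel, ← Real.exp_mul, mul_comm u] at this
  unfold F; linarith

lemma mul_F_add_F_le_F {A u D v : ℝ} (hA : 1 ≤ A) (hu : 0 ≤ u) (hD : 0 ≤ D)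
    (h : A * u + D ≤ v) : A * F u + F D ≤ F v :=
  calc A * F u + F D ≤ F (A * u) + F D := by gcongr; exact mul_F_le_F_mul hA u
    _ ≤ F (A * u + D) := F_add_F_le_F_add (by positivity) hD
    _ ≤ F v := F_monotone h

lemma mul_F_add_le_F_of_log_le {A u D v : ℝ} (hA : 1 ≤ A) (hu : 0 ≤ u) (hD : 0 ≤ D)
    (h : Real.log (A + D) ≤ v - u) : A * F u + D ≤ F v := by
  have hexp : A + D ≤ Real.exp (v - u) := by
    rw [← Real.exp_log (by linarith : 0 < A + D)]; exact Real.exp_le_exp.2 h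
  have hv : Real.exp v = Real.exp u * Real.exp (v - u) := by rw [← Real.exp_add]; ring_nf
  have := mul_le_mul_of_nonneg_left hexp (Real.exp_pos u).le
  have := mul_le_mul_of_nonneg_left (Real.one_le_exp hu) hD
  unfold F; nlinarith

lemma iterate_F_monotone (n : ℕ) : Monotone F^[n] := F_monotone.iterate n

lemma le_iterate_F (n : ℕ) (a : ℝ) : a ≤ F^[n] a := id_le_iterate_of_id_le le_F n a

lemma iterate_F_nonneg {a : ℝ} (ha : 0 ≤ a) (n : ℕ) : 0 ≤ F^[n] a := ha.trans (le_iterate_F n a)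

lemma iterate_F_le_iterate_F (a : ℝ) {m n : ℕ} (h : m ≤ n) : F^[m] a ≤ F^[n] a :=
  monotone_nat_of_le_succ (f := (F^[·] a)) (fun k => by rw [iterate_succ_apply']; exact le_F _) h

lemma iterate_F_add_iterate_F_le {a b : ℝ} (ha : 0 ≤ a) (hb : 0 ≤ b) (n : ℕ) :
    F^[n] a + F^[n] b ≤ F^[n] (a + b) := by
  induction n with
  | zero => rfl
  | succ n ih =>
    simp only [iterate_succ_apply']
    exact (F_add_F_le_F_add (iterate_F_nonneg ha n) (iterate_F_nonneg hb n)).trans (F_monotone ih)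

lemma add_mul_le_iterate_F {δ : ℝ} (hδ : 0 ≤ δ) (n : ℕ) : δ + n * (F δ - δ) ≤ F^[n] δ := by
  induction n with
  | zero => simp
  | succ n ih =>
    have hgap : 0 ≤ F^[n] δ - δ := by linarith [le_iterate_F n δ]
    have := F_add_F_le_F_add hδ hgap
    rw [iterate_succ_apply', add_sub_cancel] at *
    push_cast
    linarith [le_F (F^[n] δ - δ)]

lemma tendsto_iterate_F_atTop {δ : ℝ} (hδ : 0 < δ) : Tendsto (F^[·] δ) atTop atTop :=
  tendsto_atTop_mono (add_mul_le_iterate_F hδ.le) <| tendsto_atTop_add_const_left _ δ <|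
    tendsto_natCast_atTop_atTop.atTop_mul_const (sub_pos.2 (lt_F hδ.ne'))

lemma Finv_nonneg {t : ℝ} (ht : 0 ≤ t) : 0 ≤ Finv t := Real.log_nonneg (by linarith)

lemma F_Finv {t : ℝ} (ht : 0 ≤ t) : F (Finv t) = t := by
  simp [F, Finv, Real.exp_log (by linarith : 0 < t + 1)]

lemma iterate_Finv_nonneg {t : ℝ} (ht : 0 ≤ t) (n : ℕ) : 0 ≤ Finv^[n] t := by
  induction n with
  | zero => exact ht
  | succ n ih => rw [iterate_succ_apply']; exact Finv_nonneg ih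

lemma iterate_F_iterate_Finv {t : ℝ} (ht : 0 ≤ t) (n : ℕ) : F^[n] (Finv^[n] t) = t := by
  induction n with
  | zero => rfl
  | succ n ih =>
    rw [iterate_succ_apply' Finv, iterate_succ_apply F, F_Finv (iterate_Finv_nonneg ht n), ih]

lemma iterate_Finv_le_iff {a y : ℝ} (ha : 0 ≤ a) (n : ℕ) : Finv^[n] a ≤ y ↔ a ≤ F^[n] y := by
  conv_rhs => rw [← iterate_F_iterate_Finv ha n]
  exact ((F_strictMono.iterate n).le_iff_le).symm

lemma shiftSeq_iterate_apply (s : ℕ → ℤ) (n k : ℕ) : shiftSeq^[n] s k = s (n + k) := by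
  induction n generalizing s with
  | zero => simp
  | succ n ih => rw [iterate_succ_apply, ih, shiftSeq, add_right_comm, add_assoc]

lemma ofReal_iterate_Finv_le_tstar (s : ℕ → ℤ) (n : ℕ) :
    ENNReal.ofReal (Finv^[n] |(s n : ℝ)|) ≤ tstar s :=
  le_iSup (fun n => ENNReal.ofReal (Finv^[n] |(s n : ℝ)|)) n

lemma iterate_Finv_le_tstarR {s : ℕ → ℤ} (hs : tstar s ≠ ⊤) (n : ℕ) :
    Finv^[n] |(s n : ℝ)| ≤ tstarR s :=
  (ENNReal.ofReal_le_iff_le_toReal hs).1 (ofReal_iterate_Finv_le_tstar s n)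

lemma tstarR_nonneg (s : ℕ → ℤ) : 0 ≤ tstarR s := ENNReal.toReal_nonneg

lemma tstarR_le {s : ℕ → ℤ} {y : ℝ} (hy : 0 ≤ y) (h : ∀ n, |(s n : ℝ)| ≤ F^[n] y) :
    tstarR s ≤ y :=
  ENNReal.toReal_le_of_le_ofReal hy <| iSup_le fun n =>
    ENNReal.ofReal_le_ofReal ((iterate_Finv_le_iff (abs_nonneg _) n).2 (h n))

lemma iterate_Finv_shiftSeq (s : ℕ → ℤ) (n : ℕ) :
    Finv^[n] |(shiftSeq s n : ℝ)| = F (Finv^[n + 1] |(s (n + 1) : ℝ)|) := by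
  rw [iterate_succ_apply', F_Finv (iterate_Finv_nonneg (abs_nonneg _) n), shiftSeq]

lemma tstar_le_max_shiftSeq (s : ℕ → ℤ) :
    tstar s ≤ max (ENNReal.ofReal |(s 0 : ℝ)|) (tstar (shiftSeq s)) := by
  refine iSup_le fun n => ?_
  rcases n with _ | n
  · exact le_max_left _ _
  · refine le_max_of_le_right (le_trans ?_ (ofReal_iterate_Finv_le_tstar (shiftSeq s) n))
    rw [iterate_Finv_shiftSeq]
    exact ENNReal.ofReal_le_ofReal (le_F _)

-- If `t*_{σ s} = ∞`, its real version is the junk value `0`.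
lemma tstarR_shiftSeq_le (s : ℕ → ℤ) : tstarR (shiftSeq s) ≤ F (tstarR s) := by
  have hF : 0 ≤ F (tstarR s) := (tstarR_nonneg s).trans (le_F _)
  rcases eq_or_ne (tstar (shiftSeq s)) ⊤ with h | h
  · rwa [tstarR, h, ENNReal.toReal_top]
  have hs : tstar s ≠ ⊤ :=
    ne_top_of_le_ne_top (max_lt ENNReal.ofReal_lt_top h.lt_top).ne (tstar_le_max_shiftSeq s)
  refine ENNReal.toReal_le_of_le_ofReal hF <| iSup_le fun n => ENNReal.ofReal_le_ofReal ?_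
  rw [iterate_Finv_shiftSeq]
  exact F_monotone (iterate_Finv_le_tstarR hs (n + 1))

lemma tstarR_shiftSeq_iterate_le {s : ℕ → ℤ} {x : ℝ} {n : ℕ} (hx : 0 ≤ x)
    (h : ∀ k ≥ n, |(s k : ℝ)| ≤ F^[k] x) : tstarR (shiftSeq^[n] s) ≤ F^[n] x :=
  tstarR_le (iterate_F_nonneg hx n) fun k => by
    rw [shiftSeq_iterate_apply, ← iterate_add_apply, add_comm k]
    exact h _ (Nat.le_add_right n k)

lemma exists_lt_eventually_abs_le_iterate_F {s : ℕ → ℤ} {t : ℝ} (ht : t ∈ rayDomain s) :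
    ∃ x, 0 < x ∧ x < t ∧ ∀ᶠ n in atTop, |(s n : ℝ)| ≤ F^[n] x := by
  have ht0 : 0 < t := ENNReal.ofReal_pos.1 (lt_of_le_of_lt zero_le ht)
  obtain ⟨_, ⟨x, hx0, rfl, hlim⟩, hxt⟩ := sInf_lt_iff.1 (show tmin s < _ from ht)
  refine ⟨x, hx0, (ENNReal.ofReal_lt_ofReal_iff ht0).1 hxt, ?_⟩
  filter_upwards [eventually_lt_of_limsup_lt (hlim.trans_lt zero_lt_one)] with n hn
  rw [ENNReal.ofReal_lt_one, div_lt_one (hx0.trans_le (le_iterate_F n x))] at hn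
  exact hn.le

lemma mul_tstarR_add_iterate_F_le {s : ℕ → ℤ} {t A D : ℝ} {m : ℕ} (hA : 1 ≤ A) (hD : 0 ≤ D)
    (h : A * tstarR (shiftSeq^[m] s) + D ≤ F^[m] t) (k : ℕ) :
    A * tstarR (shiftSeq^[m + k] s) + F^[k] D ≤ F^[m + k] t := by
  induction k with
  | zero => exact h
  | succ k ih =>
    rw [← add_assoc, iterate_succ_apply', iterate_succ_apply', iterate_succ_apply']
    calc A * tstarR (shiftSeq (shiftSeq^[m + k] s)) + F (F^[k] D)
        ≤ A * F (tstarR (shiftSeq^[m + k] s)) + F (F^[k] D) := by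
          gcongr; exact tstarR_shiftSeq_le _
      _ ≤ F (F^[m + k] t) := mul_F_add_F_le_F hA (tstarR_nonneg _) (iterate_F_nonneg hD k) ih

lemma mul_tstarR_add_le_of_le {s : ℕ → ℤ} {t A D : ℝ} {m n : ℕ} (hA : 1 ≤ A) (hD : 0 ≤ D)
    (h : A * tstarR (shiftSeq^[m] s) + D ≤ F^[m] t) (hmn : m ≤ n) :
    A * tstarR (shiftSeq^[n] s) + D ≤ F^[n] t := by
  obtain ⟨k, rfl⟩ := Nat.exists_eq_add_of_le hmn
  linarith [mul_tstarR_add_iterate_F_le hA hD h k, le_iterate_F k D]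

lemma mul_tstarR_add_add_le {s : ℕ → ℤ} {t A C E : ℝ} {N₀ N₁ n : ℕ} (hA : 1 ≤ A) (hC : 0 ≤ C)
    (h₀ : A * tstarR (shiftSeq^[N₀] s) + C + 1 ≤ F^[N₀] t) (h₁ : E ≤ F^[N₁] 1)
    (hn : N₀ + N₁ ≤ n) : A * tstarR (shiftSeq^[n] s) + E + C ≤ F^[n] t := by
  obtain ⟨k, rfl⟩ := Nat.exists_eq_add_of_le (le_of_add_le_left hn)
  have hprop := mul_tstarR_add_iterate_F_le hA (by positivity) (add_assoc _ C 1 ▸ h₀) k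
  have hsplit := iterate_F_add_iterate_F_le hC zero_le_one k
  have hmono := iterate_F_le_iterate_F 1 (Nat.le_of_add_le_add_left hn)
  linarith [le_iterate_F k C]

lemma exists_mul_tstarR_add_le {s : ℕ → ℤ} {t A D : ℝ} (ht : t ∈ rayDomain s) (hA : 1 ≤ A)
    (hD : 0 ≤ D) : ∃ N, A * tstarR (shiftSeq^[N] s) + D ≤ F^[N] t := by
  obtain ⟨x, hx0, hxt, hev⟩ := exists_lt_eventually_abs_le_iterate_F ht
  obtain ⟨M, hM⟩ := eventually_atTop.1 hev
  obtain ⟨n, hlog, hnM⟩ := (((tendsto_iterate_F_atTop (sub_pos.2 hxt)).eventually_ge_atTop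
    (Real.log (A + D))).and (eventually_ge_atTop M)).exists
  have hgap : Real.log (A + D) ≤ F^[n] t - F^[n] x := by
    have := iterate_F_add_iterate_F_le (sub_nonneg.2 hxt.le) hx0.le n
    rw [sub_add_cancel] at this
    linarith
  refine ⟨n + 1, ?_⟩
  calc A * tstarR (shiftSeq^[n + 1] s) + D ≤ A * F^[n + 1] x + D := by
        gcongr; exact tstarR_shiftSeq_iterate_le hx0.le fun k hk => hM k (by omega)
    _ ≤ F^[n + 1] t := by
        rw [iterate_succ_apply', iterate_succ_apply']
        exact mul_F_add_le_F_of_log_le hA (iterate_F_nonneg hx0.le n) hD hgap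

theorem bound_initial_steps_general (s : ℕ → ℤ) (t : ℝ)
    (ht : t ∈ rayDomain s) (A B C : ℝ) (hA : 1 ≤ A) (hB : 0 ≤ B) (hC : 0 ≤ C) :
    ∀ K : ℝ, 1 ≤ K →
      (∃ N : ℕ, ∀ n : ℕ, N ≤ n →
        A * tstarR (shiftSeq^[n] s) + B * Real.log K + C ≤ F^[n] t) ∧
      (∀ t' : ℝ, t ≤ t' →
        sInf {N : ℕ | ∀ n : ℕ, N ≤ n →
            A * tstarR (shiftSeq^[n] s) + B * Real.log K + C ≤ F^[n] t'} ≤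
          sInf {N : ℕ | ∀ n : ℕ, N ≤ n →
            A * tstarR (shiftSeq^[n] s) + B * Real.log K + C ≤ F^[n] t}) ∧
      (A * tstarR s + B * Real.log K + C ≤ t →
        sInf {N : ℕ | ∀ n : ℕ, N ≤ n →
          A * tstarR (shiftSeq^[n] s) + B * Real.log K + C ≤ F^[n] t} = 0) ∧
      (∀ N0 N1 : ℕ,
        A * tstarR (shiftSeq^[N0] s) + C + 1 ≤ F^[N0] t →
        B * Real.log K ≤ F^[N1] 1 →
        ∀ n : ℕ, N0 + N1 ≤ n →
          A * tstarR (shiftSeq^[n] s) + B * Real.log K + C ≤ F^[n] t) := by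
  intro K hK
  have hD : 0 ≤ B * Real.log K + C := by have := Real.log_nonneg hK; positivity
  have hlate : ∀ N0 N1 : ℕ, A * tstarR (shiftSeq^[N0] s) + C + 1 ≤ F^[N0] t →
      B * Real.log K ≤ F^[N1] 1 → ∀ n : ℕ, N0 + N1 ≤ n →
        A * tstarR (shiftSeq^[n] s) + B * Real.log K + C ≤ F^[n] t :=
    fun _ _ h₀ h₁ _ hn => mul_tstarR_add_add_le hA hC h₀ h₁ hn
  have hexists : ∃ N : ℕ, ∀ n : ℕ, N ≤ n →
      A * tstarR (shiftSeq^[n] s) + B * Real.log K + C ≤ F^[n] t := by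
    obtain ⟨N₀, h₀⟩ := exists_mul_tstarR_add_le ht hA (by positivity : 0 ≤ C + 1)
    obtain ⟨N₁, h₁⟩ :=
      ((tendsto_iterate_F_atTop one_pos).eventually_ge_atTop (B * Real.log K)).exists
    exact ⟨N₀ + N₁, hlate N₀ N₁ (by linarith) h₁⟩
  refine ⟨hexists, fun t' htt' => ?_, fun h₀ => ?_, hlate⟩
  · obtain ⟨N, hN⟩ := hexists
    exact csInf_le_csInf (OrderBot.bddBelow _) ⟨N, hN⟩
      fun _ hM n hn => (hM n hn).trans (iterate_F_monotone n htt')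
  · refine Nat.sInf_eq_zero.2 (Or.inl fun n _ => ?_)
    have h₀' : A * tstarR (shiftSeq^[0] s) + (B * Real.log K + C) ≤ F^[0] t := by
      rw [iterate_zero_apply, iterate_zero_apply]; linarith
    linarith [mul_tstarR_add_le_of_le hA hD h₀' (Nat.zero_le n)]

/-- **Bound on Initial Iteration Steps.**
Fix `s ∈ S_0`, `t > t_s`, `A ≥ 1` and `B, C ≥ 0`. For every `K ≥ 1` there is `N` such
that `F^∘n(t) ≥ A t*_{σ^n s} + B log K + C` for all `n ≥ N`. The least such `N(K, t)` is
(1) weakly decreasing in `t` for fixed `K`; (2) zero if `t ≥ A t_s* + B log K + C`;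
(3) bounded by `N₀ + N₁` whenever `F^∘N₀(t) ≥ A t*_{σ^{N₀} s} + C + 1` and
`F^∘N₁(1) ≥ B log K`. -/
theorem bound_initial_steps (s : ℕ → ℤ) (hs : expBounded s) (t : ℝ)
    (ht : t ∈ rayDomain s) (A B C : ℝ) (hA : 1 ≤ A) (hB : 0 ≤ B) (hC : 0 ≤ C) :
    ∀ K : ℝ, 1 ≤ K →
      (∃ N : ℕ, ∀ n : ℕ, N ≤ n →
        A * tstarR (shiftSeq^[n] s) + B * Real.log K + C ≤ F^[n] t) ∧
      (∀ t' : ℝ, t ≤ t' →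
        sInf {N : ℕ | ∀ n : ℕ, N ≤ n →
            A * tstarR (shiftSeq^[n] s) + B * Real.log K + C ≤ F^[n] t'} ≤
          sInf {N : ℕ | ∀ n : ℕ, N ≤ n →
            A * tstarR (shiftSeq^[n] s) + B * Real.log K + C ≤ F^[n] t}) ∧
      (A * tstarR s + B * Real.log K + C ≤ t →
        sInf {N : ℕ | ∀ n : ℕ, N ≤ n →
          A * tstarR (shiftSeq^[n] s) + B * Real.log K + C ≤ F^[n] t} = 0) ∧
      (∀ N0 N1 : ℕ,
        A * tstarR (shiftSeq^[N0] s) + C + 1 ≤ F^[N0] t →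
        B * Real.log K ≤ F^[N1] 1 →
        ∀ n : ℕ, N0 + N1 ≤ n →
          A * tstarR (shiftSeq^[n] s) + B * Real.log K + C ≤ F^[n] t) :=
  bound_initial_steps_general s t ht A B C hA hB hC
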